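/- arXiv:2301.00898 — 3 statements merged into one kernel-verified Lean document; each statement's English description precedes it below -/
import Mathlib

section
/- Let n ≥ 3, let λ be a partition of n, and let C_λ be the conjugacy class of S_n of permutations of cycle type λ. Fix i < j in {1,…,n}. Define Ω_1 = {ω ∈ C_λ : ω(i) ∉ {i,j} and ω(j) ∉ {i,j}}, Ω_4 = {ω ∈ C_λ : ω(i)=j, ω(j)≠i} ∪ {ω ∈ C_λ : ω(j)=i, ω(i)≠j}, and Ω_5 = {ω ∈ C_λ : ω(i)=i, ω(j)≠j} ∪ {ω ∈ C_λ : ω(j)=j, ω(i)≠i}. Then: (1) #{ω ∈ Ω_1 : ω(i) > ω(j)} = #{ω ∈ Ω_1 : ω(i) < ω(j)}; (2) 2(n−2)·#{ω ∈ Ω_4 : ω(i) > ω(j)} = ((n−2)+(j−i−1))·|Ω_4|; (3) 2(n−2)·#{ω ∈ Ω_5 : ω(i) > ω(j)} = ((n−2)−(j−i−1))·|Ω_5|. -/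
/-- The conjugacy class of `S_n` consisting of permutations of cycle type `lam`
(Mathlib's `cycleType` omits fixed points, so we compare with the parts of `lam` not equal
to `1`). -/
noncomputable def conjClass (n : ℕ) (lam : n.Partition) : Finset (Equiv.Perm (Fin n)) :=
  Finset.univ.filter fun ω => ω.cycleType = Multiset.filter (fun i => i ≠ 1) lam.parts

/-!
Conjugation preserves cycle type, and conjugating by `σ` turns the condition
`ω p = v ∧ ω q = c` into `ω (σ p) = σ v ∧ ω (σ q) = σ c`. Conjugating by the transposition
`(i j)` exchanges the values `ω i` and `ω j` on `Ω₁`, which gives (1). Conjugating by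
transpositions of points outside `{p, q, v}` shows that, once `ω p = v` is pinned, the number of
`ω` in the class with `ω q = c` does not depend on `c ∉ {p, q, v}`; conjugating by `(i j)`
identifies this number for the two halves of `Ω₄` (resp. `Ω₅`). Hence each of `Ω₄`, `Ω₅` is
counted by its admissible free values, `2 (n - 2)` of them, of which `(j - 1) + (n - 2 - i)`
(resp. `i + (n - 1 - j)`), with `0`-based `i, j`, produce an inversion.
-/

open Equiv Finset

namespace Equiv.Perm

variable {α : Type*} {S : Finset (Perm α)}

theorem card_filter_conj_eq (hS : ∀ σ, ∀ ω ∈ S, σ * ω * σ⁻¹ ∈ S) (σ : Perm α)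
    {P Q : Perm α → Prop} [DecidablePred P] [DecidablePred Q]
    (h : ∀ ω, Q (σ * ω * σ⁻¹) ↔ P ω) :
    #{ω ∈ S | Q ω} = #{ω ∈ S | P ω} := by
  symm
  apply Finset.card_nbij' (fun ω => σ * ω * σ⁻¹) (fun ω => σ⁻¹ * ω * σ)
  · intro ω hω
    simp only [mem_coe, mem_filter] at hω ⊢
    exact ⟨hS σ ω hω.1, (h ω).2 hω.2⟩
  · intro ω hω
    simp only [mem_coe, mem_filter] at hω ⊢
    have hω' : σ * (σ⁻¹ * ω * σ) * σ⁻¹ = ω := by group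
    refine ⟨by simpa using hS σ⁻¹ ω hω.1, (h _).1 (by rw [hω']; exact hω.2)⟩
  · intro ω _; simp only; group
  · intro ω _; simp only; group

variable [DecidableEq α]

theorem card_filter_apply_eq_and_apply_eq_conj (hS : ∀ σ, ∀ ω ∈ S, σ * ω * σ⁻¹ ∈ S)
    (σ : Perm α) (p v q c : α) :
    #{ω ∈ S | ω (σ p) = σ v ∧ ω (σ q) = σ c} = #{ω ∈ S | ω p = v ∧ ω q = c} :=
  card_filter_conj_eq hS σ fun ω => by simp [Perm.mul_apply]

theorem exists_card_filter_apply_eq_and_apply_eq_const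
    (hS : ∀ σ, ∀ ω ∈ S, σ * ω * σ⁻¹ ∈ S) (p v q : α) :
    ∃ m, ∀ c, c ≠ p → c ≠ v → c ≠ q → #{ω ∈ S | ω p = v ∧ ω q = c} = m := by
  by_cases h : ∃ c₀, c₀ ≠ p ∧ c₀ ≠ v ∧ c₀ ≠ q
  · obtain ⟨c₀, hp, hv, hq⟩ := h
    refine ⟨#{ω ∈ S | ω p = v ∧ ω q = c₀}, fun c hcp hcv hcq => ?_⟩
    have := card_filter_apply_eq_and_apply_eq_conj hS (swap c c₀) p v q c
    rwa [swap_apply_of_ne_of_ne hcp.symm hp.symm, swap_apply_of_ne_of_ne hcv.symm hv.symm,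
      swap_apply_of_ne_of_ne hcq.symm hq.symm, swap_apply_left, eq_comm] at this
  · push Not at h
    exact ⟨0, fun c hcp hcv hcq => absurd (h c hcp hcv) hcq⟩

theorem card_filter_apply_eq_and_apply_mem {p v q : α} {m : ℕ} (T : Finset α)
    (hm : ∀ c ∈ T, #{ω ∈ S | ω p = v ∧ ω q = c} = m) :
    #{ω ∈ S | ω p = v ∧ ω q ∈ T} = #T * m := by
  rw [card_eq_sum_card_fiberwise (f := fun ω => ω q) (t := T) (by intro ω hω; simp_all),
    ← smul_eq_mul, ← sum_const]
  refine sum_congr rfl fun c hc => ?_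
  rw [← hm c hc, filter_filter]
  congr 1
  exact filter_congr fun ω _ => by constructor <;> rintro ⟨h1, h2⟩ <;> simp_all

theorem card_filter_swap_values (hS : ∀ σ, ∀ ω ∈ S, σ * ω * σ⁻¹ ∈ S) (i j : α)
    (R : α → α → Prop) [DecidableRel R] :
    #{ω ∈ S | (ω i ≠ i ∧ ω i ≠ j ∧ ω j ≠ i ∧ ω j ≠ j) ∧ R (ω i) (ω j)}
      = #{ω ∈ S | (ω i ≠ i ∧ ω i ≠ j ∧ ω j ≠ i ∧ ω j ≠ j) ∧ R (ω j) (ω i)} := by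
  refine card_filter_conj_eq hS (swap i j) fun ω => ?_
  simp only [Perm.mul_apply, swap_inv, swap_apply_left, swap_apply_right, Ne,
    swap_apply_eq_iff]
  constructor
  · rintro ⟨⟨h1, h2, h3, h4⟩, hR⟩
    rw [swap_apply_of_ne_of_ne h4 h3, swap_apply_of_ne_of_ne h2 h1] at hR
    exact ⟨⟨h4, h3, h2, h1⟩, hR⟩
  · rintro ⟨⟨h1, h2, h3, h4⟩, hR⟩
    rw [swap_apply_of_ne_of_ne h3 h4, swap_apply_of_ne_of_ne h1 h2]
    exact ⟨⟨h4, h3, h2, h1⟩, hR⟩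

theorem exists_card_filter_apply_eq_and_mem_or_swap (hS : ∀ σ, ∀ ω ∈ S, σ * ω * σ⁻¹ ∈ S)
    {p q v : α} (hv : v = p ∨ v = q) :
    ∃ m, ∀ T T' : Finset α, (∀ c ∈ T, c ≠ p ∧ c ≠ q) → (∀ c ∈ T', c ≠ p ∧ c ≠ q) →
      #{ω ∈ S | (ω p = v ∧ ω q ∈ T) ∨ (ω q = swap p q v ∧ ω p ∈ T')} = (#T + #T') * m := by
  obtain ⟨m, hm⟩ := exists_card_filter_apply_eq_and_apply_eq_const hS p v q
  have hm' (c : α) (hc : c ≠ p ∧ c ≠ q) : #{ω ∈ S | ω p = v ∧ ω q = c} = m :=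
    hm c hc.1 (by rcases hv with rfl | rfl <;> simp [hc]) hc.2
  refine ⟨m, fun T T' hT hT' => ?_⟩
  have hA : #{ω ∈ S | ω p = v ∧ ω q ∈ T} = #T * m :=
    card_filter_apply_eq_and_apply_mem T fun c hc => hm' c (hT c hc)
  have hB : #{ω ∈ S | ω q = swap p q v ∧ ω p ∈ T'} = #T' * m := by
    refine card_filter_apply_eq_and_apply_mem T' fun c hc => ?_
    obtain ⟨hcp, hcq⟩ := hT' c hc
    rw [← hm' c ⟨hcp, hcq⟩, ← card_filter_apply_eq_and_apply_eq_conj hS (swap p q),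
      swap_apply_left, swap_apply_right, swap_apply_self, swap_apply_of_ne_of_ne hcp hcq]
  have hvT' : v ∉ T' := fun h => by
    rcases hv with rfl | rfl
    exacts [(hT' _ h).1 rfl, (hT' _ h).2 rfl]
  classical
  have hdisj : _root_.Disjoint {ω ∈ S | ω p = v ∧ ω q ∈ T}
      {ω ∈ S | ω q = swap p q v ∧ ω p ∈ T'} :=
    disjoint_filter.2 fun ω _ h h' => hvT' (h.1 ▸ h'.2)
  rw [filter_or, card_union_of_disjoint hdisj, hA, hB, add_mul]

theorem two_mul_card_filter_lt_of_apply_eq_other {n : ℕ} {S : Finset (Perm (Fin n))}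
    (hS : ∀ σ, ∀ ω ∈ S, σ * ω * σ⁻¹ ∈ S) {i j : Fin n} (hij : i < j) :
    2 * (n - 2) * #{ω ∈ S | ((ω i = j ∧ ω j ≠ i) ∨ (ω j = i ∧ ω i ≠ j)) ∧ ω j < ω i}
      = ((n - 2) + ((j : ℕ) - i - 1))
        * #{ω ∈ S | (ω i = j ∧ ω j ≠ i) ∨ (ω j = i ∧ ω i ≠ j)} := by
  obtain ⟨m, hm⟩ := exists_card_filter_apply_eq_and_mem_or_swap hS (p := i) (q := j) (Or.inr rfl)
  have hall : {ω ∈ S | (ω i = j ∧ ω j ≠ i) ∨ (ω j = i ∧ ω i ≠ j)}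
      = {ω ∈ S | (ω i = j ∧ ω j ∈ ({i, j} : Finset (Fin n))ᶜ)
          ∨ (ω j = swap i j j ∧ ω i ∈ ({i, j} : Finset (Fin n))ᶜ)} :=
    filter_congr fun ω _ => by
      have := ω.injective.ne hij.ne
      simp only [swap_apply_right, mem_compl, mem_insert, mem_singleton]
      grind
  have hinv : {ω ∈ S | ((ω i = j ∧ ω j ≠ i) ∨ (ω j = i ∧ ω i ≠ j)) ∧ ω j < ω i}
      = {ω ∈ S | (ω i = j ∧ ω j ∈ (Iio j).erase i)
          ∨ (ω j = swap i j j ∧ ω i ∈ (Ioi i).erase j)} :=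
    filter_congr fun ω _ => by
      have := ω.injective.ne hij.ne
      simp only [swap_apply_right, mem_erase, mem_Iio, mem_Ioi]
      grind
  have hlt : ∀ c ∈ (Iio j).erase i, c ≠ i ∧ c ≠ j := fun c hc => by
    simp only [mem_erase, mem_Iio] at hc; exact ⟨hc.1, hc.2.ne⟩
  have hgt : ∀ c ∈ (Ioi i).erase j, c ≠ i ∧ c ≠ j := fun c hc => by
    simp only [mem_erase, mem_Ioi] at hc; exact ⟨hc.2.ne', hc.1⟩
  have hD : ∀ c ∈ ({i, j} : Finset (Fin n))ᶜ, c ≠ i ∧ c ≠ j := fun c hc => by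
    simpa only [mem_compl, mem_insert, mem_singleton, not_or] using hc
  rw [hall, hinv, hm _ _ hlt hgt, hm _ _ hD hD,
    card_erase_of_mem (by simpa), card_erase_of_mem (by simpa), Fin.card_Iio, Fin.card_Ioi,
    card_compl, card_pair hij.ne, Fintype.card_fin]
  have : (j : ℕ) - 1 + (n - 1 - i - 1) = (n - 2) + ((j : ℕ) - i - 1) := by omega
  rw [this]
  ring

theorem two_mul_card_filter_lt_of_apply_eq_self {n : ℕ} {S : Finset (Perm (Fin n))}
    (hS : ∀ σ, ∀ ω ∈ S, σ * ω * σ⁻¹ ∈ S) {i j : Fin n} (hij : i < j) :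
    2 * (n - 2) * #{ω ∈ S | ((ω i = i ∧ ω j ≠ j) ∨ (ω j = j ∧ ω i ≠ i)) ∧ ω j < ω i}
      = ((n - 2) - ((j : ℕ) - i - 1))
        * #{ω ∈ S | (ω i = i ∧ ω j ≠ j) ∨ (ω j = j ∧ ω i ≠ i)} := by
  obtain ⟨m, hm⟩ := exists_card_filter_apply_eq_and_mem_or_swap hS (p := i) (q := j) (Or.inl rfl)
  have hall : {ω ∈ S | (ω i = i ∧ ω j ≠ j) ∨ (ω j = j ∧ ω i ≠ i)}
      = {ω ∈ S | (ω i = i ∧ ω j ∈ ({i, j} : Finset (Fin n))ᶜ)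
          ∨ (ω j = swap i j i ∧ ω i ∈ ({i, j} : Finset (Fin n))ᶜ)} :=
    filter_congr fun ω _ => by
      have := ω.injective.ne hij.ne
      simp only [swap_apply_left, mem_compl, mem_insert, mem_singleton]
      grind
  have hinv : {ω ∈ S | ((ω i = i ∧ ω j ≠ j) ∨ (ω j = j ∧ ω i ≠ i)) ∧ ω j < ω i}
      = {ω ∈ S | (ω i = i ∧ ω j ∈ Iio i) ∨ (ω j = swap i j i ∧ ω i ∈ Ioi j)} :=
    filter_congr fun ω _ => by
      have := ω.injective.ne hij.ne
      simp only [swap_apply_left, mem_Iio, mem_Ioi]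
      grind
  have hlt : ∀ c ∈ Iio i, c ≠ i ∧ c ≠ j := fun c hc => by
    rw [mem_Iio] at hc; exact ⟨hc.ne, (hc.trans hij).ne⟩
  have hgt : ∀ c ∈ Ioi j, c ≠ i ∧ c ≠ j := fun c hc => by
    rw [mem_Ioi] at hc; exact ⟨(hij.trans hc).ne', hc.ne'⟩
  have hD : ∀ c ∈ ({i, j} : Finset (Fin n))ᶜ, c ≠ i ∧ c ≠ j := fun c hc => by
    simpa only [mem_compl, mem_insert, mem_singleton, not_or] using hc
  rw [hall, hinv, hm _ _ hlt hgt, hm _ _ hD hD, Fin.card_Iio, Fin.card_Ioi,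
    card_compl, card_pair hij.ne, Fintype.card_fin]
  have : (i : ℕ) + (n - 1 - j) = (n - 2) - ((j : ℕ) - i - 1) := by omega
  rw [this]
  ring

end Equiv.Perm

theorem conj_mem_conjClass {n : ℕ} {lam : n.Partition} (σ : Equiv.Perm (Fin n))
    {ω : Equiv.Perm (Fin n)} (hω : ω ∈ conjClass n lam) : σ * ω * σ⁻¹ ∈ conjClass n lam := by
  simp only [conjClass, mem_filter, mem_univ, true_and] at hω ⊢
  rwa [Equiv.Perm.cycleType_conj]

theorem stmt1_general (n : ℕ) (lam : n.Partition) (i j : Fin n) (hij : i < j)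
    (Ω1 Ω4 Ω5 : Finset (Equiv.Perm (Fin n)))
    (hΩ1 : Ω1 = (conjClass n lam).filter fun ω =>
      ω i ≠ i ∧ ω i ≠ j ∧ ω j ≠ i ∧ ω j ≠ j)
    (hΩ4 : Ω4 = (conjClass n lam).filter fun ω =>
      (ω i = j ∧ ω j ≠ i) ∨ (ω j = i ∧ ω i ≠ j))
    (hΩ5 : Ω5 = (conjClass n lam).filter fun ω =>
      (ω i = i ∧ ω j ≠ j) ∨ (ω j = j ∧ ω i ≠ i)) :
    (Ω1.filter fun ω => ω j < ω i).card = (Ω1.filter fun ω => ω i < ω j).card ∧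
    2 * (n - 2) * (Ω4.filter fun ω => ω j < ω i).card
      = ((n - 2) + ((j : ℕ) - (i : ℕ) - 1)) * Ω4.card ∧
    2 * (n - 2) * (Ω5.filter fun ω => ω j < ω i).card
      = ((n - 2) - ((j : ℕ) - (i : ℕ) - 1)) * Ω5.card := by
  have hS : ∀ σ, ∀ ω ∈ conjClass n lam, σ * ω * σ⁻¹ ∈ conjClass n lam :=
    fun σ _ => conj_mem_conjClass σ
  subst hΩ1 hΩ4 hΩ5
  simp only [filter_filter]
  exact ⟨Equiv.Perm.card_filter_swap_values hS i j fun a b => b < a,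
    Equiv.Perm.two_mul_card_filter_lt_of_apply_eq_other hS hij,
    Equiv.Perm.two_mul_card_filter_lt_of_apply_eq_self hS hij⟩

theorem stmt1 (n : ℕ) (hn : 3 ≤ n) (lam : n.Partition) (i j : Fin n) (hij : i < j)
    (Ω1 Ω4 Ω5 : Finset (Equiv.Perm (Fin n)))
    (hΩ1 : Ω1 = (conjClass n lam).filter fun ω =>
      ω i ≠ i ∧ ω i ≠ j ∧ ω j ≠ i ∧ ω j ≠ j)
    (hΩ4 : Ω4 = (conjClass n lam).filter fun ω =>
      (ω i = j ∧ ω j ≠ i) ∨ (ω j = i ∧ ω i ≠ j))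
    (hΩ5 : Ω5 = (conjClass n lam).filter fun ω =>
      (ω i = i ∧ ω j ≠ j) ∨ (ω j = j ∧ ω i ≠ i)) :
    (Ω1.filter fun ω => ω j < ω i).card = (Ω1.filter fun ω => ω i < ω j).card ∧
    2 * (n - 2) * (Ω4.filter fun ω => ω j < ω i).card
      = ((n - 2) + ((j : ℕ) - (i : ℕ) - 1)) * Ω4.card ∧
    2 * (n - 2) * (Ω5.filter fun ω => ω j < ω i).card
      = ((n - 2) - ((j : ℕ) - (i : ℕ) - 1)) * Ω5.card :=
  stmt1_general n lam i j hij Ω1 Ω4 Ω5 hΩ1 hΩ4 hΩ5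
end

section
/- Let n ≥ 3 and let λ be a partition of n with a_k parts equal to k. For any i < j in {1,…,n}, the probability that a uniformly random permutation ω in the conjugacy class C_λ satisfies ω(i) > ω(j) equals 1/2 + a_2/(n(n−1)) − a_1(a_1−1)/(2n(n−1)) + (j−i−1)·(n − n·a_1 − a_1 + a_1² − 2a_2)/(n(n−1)(n−2)). -/
/-!
Write `A(i, j)` for the number of `ω ∈ C_λ` with `ω j < ω i`, so that
`A(i, j) + A(j, i) = |C_λ|`. Conjugation by an adjacent transposition `s = (a a+1)` preserves
`C_λ`, and `s` preserves the relative order of every pair of points except `{a, a+1}`. Taking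
`s = (i i+1)` expresses `A(i, i+1) - A(i+1, i)` as the number of `ω` exchanging `i` and `i+1`
minus the number fixing both; taking `s = (j j+1)` shows that `A(i, j) - A(i, j+1)` is the number
of `ω` with `ω (j+1) = j+1`, `ω i = j` minus the number with `ω i = j+1`, `ω (j+1) = j`. Since
`C_λ` is closed under conjugation and `S_n` is `3`-transitive, each of these counts depends only
on the pattern of coincidences, and double counting expresses it through the `a_1` fixed points
and the `2 a_2` points in `2`-cycles of every `ω ∈ C_λ`. Hence `A(i, j)` is affine in `j - i`.
-/

open Equiv Finset

variable {α : Type*}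

namespace Finset

variable {β γ : Type*}

theorem card_mul_eq_sum_card_filter {s : Finset β} {t : Finset γ} (r : γ → β → Prop)
    [∀ c b, Decidable (r c b)] {K : ℕ} (h : ∀ c ∈ t, #{b ∈ s | r c b} = K) :
    #t * K = ∑ b ∈ s, #{c ∈ t | r c b} := by
  rw [← sum_const_nat h]
  exact sum_card_bipartiteAbove_eq_sum_card_bipartiteBelow r

theorem card_eq_card_filter_add_card_mul [DecidableEq γ] {s : Finset β} (f : β → γ) {p : γ}
    {t : Finset γ} {K : ℕ} (hp : p ∉ t) (hs : ∀ b ∈ s, f b = p ∨ f b ∈ t)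
    (ht : ∀ c ∈ t, #{b ∈ s | f b = c} = K) : #s = #{b ∈ s | f b = p} + #t * K := by
  rw [card_eq_sum_card_fiberwise (t := insert p t) (fun b hb => mem_insert.2 (hs b hb)),
    sum_insert hp, sum_const_nat ht]

theorem card_offDiag_eq_descFactorial [DecidableEq β] (s : Finset β) :
    #s.offDiag = (#s).descFactorial 2 := by
  rw [offDiag_card, Nat.descFactorial, Nat.descFactorial_one, Nat.sub_one_mul]

theorem card_filter_apply_lt_add_card_filter_apply_gt [LinearOrder α] (s : Finset (Perm α))
    {x y : α} (hxy : x ≠ y) : #{ω ∈ s | ω y < ω x} + #{ω ∈ s | ω x < ω y} = #s := by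
  rw [← card_filter_add_card_filter_not (s := s) (p := fun ω => ω y < ω x)]
  congr 2
  refine filter_congr fun ω _ => ?_
  rw [not_lt, le_iff_lt_or_eq, or_iff_left (ω.injective.ne hxy)]

end Finset

theorem Equiv.Perm.exists_apply_eq_and_apply_eq {u v u' v' : α} (huv : u ≠ v)
    (huv' : u' ≠ v') : ∃ σ : Perm α, σ u = u' ∧ σ v = v' := by
  obtain ⟨σ, hσ⟩ := Perm.exists_extending_pair ![u, v] ![u', v']
    (by simpa [Fin.forall_fin_two, Function.Injective] using ⟨huv, huv.symm⟩)
    (by simpa [Fin.forall_fin_two, Function.Injective] using ⟨huv', huv'.symm⟩)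
  exact ⟨σ, hσ 0, hσ 1⟩

theorem Equiv.swap_lt_swap_or_iff [LinearOrder α] {a b : α} (hab : a ⋖ b) (x y : α) :
    swap a b x < swap a b y ∨ (x = a ∧ y = b) ↔ x < y ∨ (x = b ∧ y = a) := by
  have hlt : ∀ {z}, z ≠ a → (z < b ↔ z < a) := fun hz => by
    rw [hab.lt_iff_le_left, le_iff_lt_or_eq, or_iff_left hz]
  have hgt : ∀ {z}, z ≠ b → (a < z ↔ b < z) := fun hz => by
    rw [← hab.le_iff_lt_right, le_iff_lt_or_eq, or_iff_left hz.symm]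
  have hab' := hab.lt
  have hne := hab'.ne
  rcases eq_or_ne a x with rfl | hxa
  · rcases eq_or_ne a y with rfl | hya
    · simp [hne]
    rcases eq_or_ne b y with rfl | hyb
    · simp [hab']
    simp [swap_apply_of_ne_of_ne hya.symm hyb.symm, hne, hyb.symm, (hgt hyb.symm).symm]
  rcases eq_or_ne b x with rfl | hxb
  · rcases eq_or_ne a y with rfl | hya
    · simp [hab']
    rcases eq_or_ne b y with rfl | hyb
    · simp [hne.symm]
    simp [swap_apply_of_ne_of_ne hya.symm hyb.symm, hya.symm, hyb.symm, hgt hyb.symm]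
  rw [swap_apply_of_ne_of_ne hxa.symm hxb.symm]
  rcases eq_or_ne a y with rfl | hya
  · simp [hxa.symm, hxb.symm, hlt hxa.symm]
  rcases eq_or_ne b y with rfl | hyb
  · simp [hxa.symm, hxb.symm, hlt hxa.symm]
  simp [swap_apply_of_ne_of_ne hya.symm hyb.symm, hxa.symm, hxb.symm]

theorem Fin.eq_sub_nsmul_of_covBy {M : Type*} [AddCommGroup M] {n : ℕ} {f : Fin n → M}
    {i : Fin n} {b δ : M} (hbase : ∀ k, i ⋖ k → f k = b)
    (hstep : ∀ j k, i < j → j ⋖ k → f k = f j - δ) {j : Fin n} (hij : i < j) :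
    f j = b - ((j : ℕ) - i - 1) • δ := by
  rw [Fin.lt_def] at hij
  obtain ⟨d, hd⟩ : ∃ d, (j : ℕ) = i + 1 + d := ⟨j - i - 1, by omega⟩
  induction d generalizing j with
  | zero => simp [hbase j (Fin.covBy_iff.2 (by simp; omega)), hd]
  | succ d ih =>
    let j' : Fin n := ⟨i + 1 + d, by omega⟩
    have hj' : f j' = b - d • δ := by
      rw [ih (j := j') (by simp [j']; omega) rfl, show (i : ℕ) + 1 + d - i - 1 = d by omega]
    rw [hstep j' j (by simp [Fin.lt_def, j']; omega) (Fin.covBy_iff.2 (by simp [j']; omega)), hj',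
      hd, show (i : ℕ) + 1 + (d + 1) - i - 1 = d + 1 by omega, succ_nsmul]
    abel

namespace Equiv.Perm

variable [DecidableEq α] [Fintype α]

theorem card_filter_apply_eq_self (ω : Perm α) :
    #{x | ω x = x} = Fintype.card α - ω.cycleType.sum := by
  rw [sum_cycleType, ← card_compl]
  congr 1
  ext x
  simp

theorem card_support_cycleOf_eq_two_iff (ω : Perm α) (x : α) :
    #(ω.cycleOf x).support = 2 ↔ ω x ≠ x ∧ ω (ω x) = x := by
  by_cases hx : ω x = x
  · simp [(cycleOf_eq_one_iff ω).2 hx, hx]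
  have hmem : x ∈ (ω.cycleOf x).support :=
    mem_support_cycleOf_iff.2 ⟨.refl _ _, mem_support.2 hx⟩
  have hsq : ω (ω x) = x ↔ #(ω.cycleOf x).support ∣ 2 := by
    rw [← (isCycleOn_support_cycleOf ω x).pow_apply_eq hmem, sq, mul_apply]
  have htwo : 2 ≤ #(ω.cycleOf x).support := two_le_card_support_cycleOf_iff.2 hx
  rw [hsq]
  constructor
  · intro h
    exact ⟨hx, h ▸ dvd_rfl⟩
  · rintro ⟨-, h⟩
    exact le_antisymm (Nat.le_of_dvd two_pos h) htwo

theorem card_filter_card_support_cycleOf_eq (ω : Perm α) {k : ℕ} (hk : k ≠ 0) :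
    #{x | #(ω.cycleOf x).support = k} = k * ω.cycleType.count k := by
  have hsupp : ∀ x, #(ω.cycleOf x).support = k → x ∈ ω.support := fun x hx =>
    mem_support.2 fun h => hk (by rw [← hx, (cycleOf_eq_one_iff ω).2 h, support_one, card_empty])
  have hmaps : ∀ x ∈ ({x | #(ω.cycleOf x).support = k} : Finset α),
      ω.cycleOf x ∈ ω.cycleFactorsFinset.filter (#·.support = k) := by
    intro x hx
    rw [mem_filter] at hx ⊢
    exact ⟨cycleOf_mem_cycleFactorsFinset_iff.2 (hsupp x hx.2), hx.2⟩
  have hfiber : ∀ c ∈ ω.cycleFactorsFinset.filter (#·.support = k),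
      #{x ∈ ({x | #(ω.cycleOf x).support = k} : Finset α) | ω.cycleOf x = c} = k := by
    intro c hc
    rw [mem_filter] at hc
    suffices h : {x ∈ ({x | #(ω.cycleOf x).support = k} : Finset α) | ω.cycleOf x = c}
        = c.support by rw [h, hc.2]
    ext x
    simp only [mem_filter, mem_univ, true_and]
    constructor
    · rintro ⟨hx, rfl⟩
      exact mem_support_cycleOf_iff.2 ⟨.refl _ _, hsupp x hx⟩
    · intro hx
      have hc' := cycle_is_cycleOf hx hc.1
      exact ⟨hc' ▸ hc.2, hc'.symm⟩
  rw [card_eq_sum_card_fiberwise hmaps, sum_const_nat hfiber, mul_comm, cycleType_def,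
    Multiset.count_map, card_def, filter_val]
  simp only [Function.comp_apply, eq_comm]

theorem card_filter_apply_ne_and_apply_apply_eq (ω : Perm α) :
    #{x | ω x ≠ x ∧ ω (ω x) = x} = 2 * ω.cycleType.count 2 := by
  rw [← card_filter_card_support_cycleOf_eq ω two_ne_zero]
  simp only [card_support_cycleOf_eq_two_iff]

end Equiv.Perm

def ConjClosed (C : Finset (Perm α)) : Prop :=
  ∀ σ : Perm α, ∀ ω ∈ C, σ * ω * σ⁻¹ ∈ C

namespace ConjClosed

variable {C : Finset (Perm α)}

theorem card_filter_conj (hC : ConjClosed C) (σ : Perm α) (P : Perm α → Prop)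
    [DecidablePred P] : #{ω ∈ C | P (σ⁻¹ * ω * σ)} = #{ω ∈ C | P ω} := by
  refine card_nbij' (fun ω => σ⁻¹ * ω * σ) (fun ω => σ * ω * σ⁻¹) ?_ ?_ ?_ ?_
  · intro ω hω
    simp only [coe_filter, Set.mem_ofPred_eq] at hω ⊢
    exact ⟨by simpa using hC σ⁻¹ ω hω.1, hω.2⟩
  · intro ω hω
    simp only [coe_filter, Set.mem_ofPred_eq] at hω ⊢
    exact ⟨hC σ ω hω.1, by simpa [mul_assoc] using hω.2⟩
  · intro ω _
    simp [mul_assoc]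
  · intro ω _
    simp [mul_assoc]

section DecidableEq

variable [DecidableEq α]

theorem card_filter_conj_apply_eq (hC : ConjClosed C) (σ : Perm α) (a b : α) :
    #{ω ∈ C | ω (σ a) = σ b} = #{ω ∈ C | ω a = b} := by
  rw [← hC.card_filter_conj σ fun ω => ω a = b]
  simp [Perm.mul_apply, symm_apply_eq]

theorem card_filter_conj_apply_eq_and_apply_eq (hC : ConjClosed C) (σ : Perm α)
    (a b c d : α) :
    #{ω ∈ C | ω (σ a) = σ b ∧ ω (σ c) = σ d} = #{ω ∈ C | ω a = b ∧ ω c = d} := by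
  rw [← hC.card_filter_conj σ fun ω => ω a = b ∧ ω c = d]
  simp [Perm.mul_apply, symm_apply_eq]

theorem card_filter_fix_eq (hC : ConjClosed C) (u u' : α) :
    #{ω ∈ C | ω u = u} = #{ω ∈ C | ω u' = u'} := by
  simpa using (hC.card_filter_conj_apply_eq (swap u u') u u).symm

theorem card_filter_apply_eq_eq (hC : ConjClosed C) {u v u' v' : α} (huv : u ≠ v)
    (huv' : u' ≠ v') : #{ω ∈ C | ω u = v} = #{ω ∈ C | ω u' = v'} := by
  obtain ⟨σ, rfl, rfl⟩ := Perm.exists_apply_eq_and_apply_eq huv huv'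
  exact (hC.card_filter_conj_apply_eq σ u v).symm

theorem card_filter_fix_fix_eq (hC : ConjClosed C) {u v u' v' : α} (huv : u ≠ v)
    (huv' : u' ≠ v') :
    #{ω ∈ C | ω u = u ∧ ω v = v} = #{ω ∈ C | ω u' = u' ∧ ω v' = v'} := by
  obtain ⟨σ, rfl, rfl⟩ := Perm.exists_apply_eq_and_apply_eq huv huv'
  exact (hC.card_filter_conj_apply_eq_and_apply_eq σ u u v v).symm

theorem card_filter_swap_eq (hC : ConjClosed C) {u v u' v' : α} (huv : u ≠ v)
    (huv' : u' ≠ v') :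
    #{ω ∈ C | ω u = v ∧ ω v = u} = #{ω ∈ C | ω u' = v' ∧ ω v' = u'} := by
  obtain ⟨σ, rfl, rfl⟩ := Perm.exists_apply_eq_and_apply_eq huv huv'
  exact (hC.card_filter_conj_apply_eq_and_apply_eq σ u v v u).symm

variable [Fintype α]

theorem card_mul_card_filter_fix (hC : ConjClosed C) (u : α) :
    Fintype.card α * #{ω ∈ C | ω u = u} = ∑ ω ∈ C, #{x | ω x = x} := by
  rw [← card_univ]
  exact card_mul_eq_sum_card_filter (fun x (ω : Perm α) => ω x = x)
    fun x _ => hC.card_filter_fix_eq x u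

theorem descFactorial_mul_card_filter_fix_fix (hC : ConjClosed C) {u v : α} (huv : u ≠ v) :
    (Fintype.card α).descFactorial 2 * #{ω ∈ C | ω u = u ∧ ω v = v}
      = ∑ ω ∈ C, (#{x | ω x = x}).descFactorial 2 := by
  have hpairs : ∀ ω : Perm α, (univ.offDiag.filter fun p => ω p.1 = p.1 ∧ ω p.2 = p.2)
      = (univ.filter fun x => ω x = x).offDiag := by
    intro ω
    ext ⟨x, y⟩
    simp only [mem_filter, mem_offDiag, mem_univ, true_and]
    tauto
  rw [← card_univ, ← card_offDiag_eq_descFactorial,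
    card_mul_eq_sum_card_filter (fun p (ω : Perm α) => ω p.1 = p.1 ∧ ω p.2 = p.2)
      fun p hp => hC.card_filter_fix_fix_eq (mem_offDiag.1 hp).2.2 huv]
  simp only [hpairs, card_offDiag_eq_descFactorial]

theorem descFactorial_mul_card_filter_swap (hC : ConjClosed C) {u v : α} (huv : u ≠ v) :
    (Fintype.card α).descFactorial 2 * #{ω ∈ C | ω u = v ∧ ω v = u}
      = ∑ ω ∈ C, #{x | ω x ≠ x ∧ ω (ω x) = x} := by
  have hpairs : ∀ ω : Perm α, #(univ.offDiag.filter fun p => ω p.1 = p.2 ∧ ω p.2 = p.1)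
      = #{x | ω x ≠ x ∧ ω (ω x) = x} := by
    intro ω
    refine card_nbij' Prod.fst (fun x => (x, ω x)) ?_ ?_ ?_ ?_
    · rintro ⟨x, y⟩ h
      simp only [coe_filter, mem_offDiag, mem_univ, true_and, Set.mem_ofPred_eq] at h ⊢
      exact ⟨h.2.1 ▸ Ne.symm h.1, h.2.1 ▸ h.2.2⟩
    · intro x hx
      simp only [coe_filter, mem_offDiag, mem_univ, true_and, Set.mem_ofPred_eq] at hx ⊢
      exact ⟨Ne.symm hx.1, hx.2⟩
    · rintro ⟨x, y⟩ h
      simp only [coe_filter, mem_offDiag, mem_univ, true_and, Set.mem_ofPred_eq] at h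
      simp [h.2.1]
    · intro x _
      rfl
  rw [← card_univ, ← card_offDiag_eq_descFactorial,
    card_mul_eq_sum_card_filter (fun p (ω : Perm α) => ω p.1 = p.2 ∧ ω p.2 = p.1)
      fun p hp => hC.card_filter_swap_eq (mem_offDiag.1 hp).2.2 huv]
  simp only [hpairs]

theorem card_eq_card_filter_fix_add (hC : ConjClosed C) {u v : α} (huv : u ≠ v) :
    #C = #{ω ∈ C | ω u = u} + (Fintype.card α - 1) * #{ω ∈ C | ω u = v} := by
  rw [← card_univ, ← card_erase_of_mem (mem_univ u)]
  refine card_eq_card_filter_add_card_mul (fun ω : Perm α => ω u) (notMem_erase u univ) ?_ ?_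
  · intro ω _
    by_cases h : ω u = u
    · exact Or.inl h
    · exact Or.inr (mem_erase.2 ⟨h, mem_univ _⟩)
  · intro x hx
    exact hC.card_filter_apply_eq_eq (mem_erase.1 hx).1.symm huv

theorem card_filter_fix_eq_add (hC : ConjClosed C) {u v w : α} (huv : u ≠ v)
    (huw : u ≠ w) (hvw : v ≠ w) :
    #{ω ∈ C | ω u = u} = #{ω ∈ C | ω u = u ∧ ω v = v}
      + (Fintype.card α - 2) * #{ω ∈ C | ω u = u ∧ ω v = w} := by
  have hcard : #((univ.erase v).erase u) = Fintype.card α - 2 := by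
    rw [card_erase_of_mem (mem_erase.2 ⟨huv, mem_univ u⟩), card_erase_of_mem (mem_univ v),
      card_univ, Nat.sub_sub]
  rw [← hcard, ← filter_filter]
  refine card_eq_card_filter_add_card_mul (fun ω : Perm α => ω v) (by simp) ?_ ?_
  · intro ω hω
    have hωu : ω u = u := (mem_filter.1 hω).2
    by_cases h : ω v = v
    · exact Or.inl h
    · refine Or.inr (mem_erase.2 ⟨fun h' => huv (ω.injective ?_),
        mem_erase.2 ⟨h, mem_univ _⟩⟩)
      rw [hωu, h']
  · intro x hx
    simp only [mem_erase, mem_univ, and_true] at hx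
    rw [filter_filter, ← swap_apply_left w x,
      ← hC.card_filter_conj_apply_eq_and_apply_eq (swap w x) u u v w,
      swap_apply_of_ne_of_ne huw hx.1.symm, swap_apply_of_ne_of_ne hvw hx.2.symm]

theorem card_filter_apply_eq_eq_add (hC : ConjClosed C) {u v w : α} (huv : u ≠ v)
    (huw : u ≠ w) (hvw : v ≠ w) :
    #{ω ∈ C | ω u = v} = #{ω ∈ C | ω u = v ∧ ω v = u}
      + (Fintype.card α - 2) * #{ω ∈ C | ω u = v ∧ ω v = w} := by
  have hcard : #((univ.erase u).erase v) = Fintype.card α - 2 := by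
    rw [card_erase_of_mem (mem_erase.2 ⟨huv.symm, mem_univ v⟩), card_erase_of_mem (mem_univ u),
      card_univ, Nat.sub_sub]
  rw [← hcard, ← filter_filter]
  refine card_eq_card_filter_add_card_mul (fun ω : Perm α => ω v) (by simp) ?_ ?_
  · intro ω hω
    have hωu : ω u = v := (mem_filter.1 hω).2
    by_cases h : ω v = u
    · exact Or.inl h
    · refine Or.inr (mem_erase.2 ⟨fun h' => huv (ω.injective ?_),
        mem_erase.2 ⟨h, mem_univ _⟩⟩)
      rw [hωu, h']
  · intro x hx
    simp only [mem_erase, mem_univ, and_true] at hx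
    rw [filter_filter, ← swap_apply_left w x,
      ← hC.card_filter_conj_apply_eq_and_apply_eq (swap w x) u v v w,
      swap_apply_of_ne_of_ne huw hx.2.symm, swap_apply_of_ne_of_ne hvw hx.1.symm]

end DecidableEq

section LinearOrder

variable [LinearOrder α] [Fintype α]

theorem card_filter_conj_swap_lt_add (hC : ConjClosed C) {a b : α} (hab : a ⋖ b) (x y : α) :
    #{ω ∈ C | ω (swap a b y) < ω (swap a b x)} + #{ω ∈ C | ω y = a ∧ ω x = b}
      = #{ω ∈ C | ω y < ω x} + #{ω ∈ C | ω y = b ∧ ω x = a} := by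
  have hba : ¬ b < a := hab.lt.not_gt
  rw [← hC.card_filter_conj (swap a b) fun ω => ω (swap a b y) < ω (swap a b x)]
  simp only [Perm.mul_apply, swap_inv, swap_apply_self]
  rw [← card_union_of_disjoint, ← card_union_of_disjoint, ← filter_or, ← filter_or,
    filter_congr fun ω _ => swap_lt_swap_or_iff hab (ω y) (ω x)]
  · refine disjoint_filter.2 fun ω _ hlt heq => ?_
    rw [heq.1, heq.2] at hlt
    exact hba hlt
  · refine disjoint_filter.2 fun ω _ hlt heq => ?_
    rw [heq.1, heq.2, swap_apply_left, swap_apply_right] at hlt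
    exact hba hlt

theorem two_mul_card_filter_lt_of_covBy (hC : ConjClosed C) {i k : α} (hik : i ⋖ k) :
    2 * #{ω ∈ C | ω k < ω i} + #{ω ∈ C | ω i = i ∧ ω k = k}
      = #C + #{ω ∈ C | ω i = k ∧ ω k = i} := by
  have hswap := hC.card_filter_conj_swap_lt_add hik k i
  rw [swap_apply_left, swap_apply_right] at hswap
  have htotal := C.card_filter_apply_lt_add_card_filter_apply_gt hik.lt.ne
  omega

theorem card_sub_two_mul_card_filter_lt_add_of_covBy (hC : ConjClosed C) {i j k : α}
    (hjk : j ⋖ k) (hij : i ≠ j) (hik : i ≠ k) :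
    (Fintype.card α - 2) * #{ω ∈ C | ω j < ω i} + #{ω ∈ C | ω k = k ∧ ω i = i}
        + #{ω ∈ C | ω i = k}
      = (Fintype.card α - 2) * #{ω ∈ C | ω k < ω i} + #{ω ∈ C | ω k = k}
        + #{ω ∈ C | ω i = k ∧ ω k = i} := by
  have hswap := hC.card_filter_conj_swap_lt_add hjk i k
  have hcomm : #{ω ∈ C | ω k = j ∧ ω i = k} = #{ω ∈ C | ω i = k ∧ ω k = j} := by
    simp only [and_comm]
  rw [swap_apply_right, swap_apply_of_ne_of_ne hij hik, hcomm] at hswap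
  rw [hC.card_filter_fix_eq_add hik.symm hjk.lt.ne' hij,
    hC.card_filter_apply_eq_eq_add hik hij hjk.lt.ne']
  linear_combination (Fintype.card α - 2) * hswap

end LinearOrder

theorem two_mul_card_filter_lt_eq {n : ℕ} {C : Finset (Perm (Fin n))} (hC : ConjClosed C)
    {i j : Fin n} (hij : i < j) :
    ((n : ℤ) - 2) * (2 * #{ω ∈ C | ω j < ω i})
      = ((n : ℤ) - 2)
          * (#C - #{ω ∈ C | ω i = i ∧ ω j = j} + #{ω ∈ C | ω i = j ∧ ω j = i})
        - ((j : ℕ) - i - 1 : ℕ)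
          * (2 * ((#{ω ∈ C | ω i = i} - #{ω ∈ C | ω i = i ∧ ω j = j})
            - (#{ω ∈ C | ω i = j} - #{ω ∈ C | ω i = j ∧ ω j = i}))) := by
  have hn : ((n - 2 : ℕ) : ℤ) = n - 2 := by
    have := j.isLt
    rw [Fin.lt_def] at hij
    omega
  rw [← nsmul_eq_mul]
  refine Fin.eq_sub_nsmul_of_covBy (f := fun k => ((n : ℤ) - 2) * (2 * #{ω ∈ C | ω k < ω i}))
    (fun k hik => ?_) (fun j' k hij' hjk => ?_) hij
  · have h := hC.two_mul_card_filter_lt_of_covBy hik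
    rw [hC.card_filter_fix_fix_eq hik.lt.ne hij.ne, hC.card_filter_swap_eq hik.lt.ne hij.ne] at h
    have h' := congrArg (Nat.cast : ℕ → ℤ) h
    push_cast at h'
    linear_combination ((n : ℤ) - 2) * h'
  · have hik : i ≠ k := (hij'.trans hjk.lt).ne
    have h := hC.card_sub_two_mul_card_filter_lt_add_of_covBy hjk hij'.ne hik
    rw [hC.card_filter_fix_fix_eq hik.symm hij.ne, hC.card_filter_apply_eq_eq hik hij.ne,
      hC.card_filter_fix_eq k i, hC.card_filter_swap_eq hik hij.ne, Fintype.card_fin] at h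
    have h' := congrArg (Nat.cast : ℕ → ℤ) h
    push_cast [hn] at h'
    linear_combination (-2) * h'

end ConjClosed

theorem Nat.Partition.sum_filter_ne_one_add_count_one {n : ℕ} (lam : n.Partition) :
    (lam.parts.filter (· ≠ 1)).sum + lam.parts.count 1 = n := by
  conv_rhs =>
    rw [← lam.parts_sum, ← Multiset.sum_filter_add_sum_filter_not (s := lam.parts) (· ≠ 1)]
  simp [Multiset.filter_eq']

theorem conjClosed_conjClass (n : ℕ) (lam : n.Partition) : ConjClosed (conjClass n lam) := by
  intro σ ω hω
  simp only [conjClass, mem_filter, mem_univ, true_and] at hω ⊢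
  rwa [Perm.cycleType_conj]

theorem conjClass_nonempty (n : ℕ) (lam : n.Partition) : (conjClass n lam).Nonempty := by
  obtain ⟨ω, hω⟩ : ∃ ω : Perm (Fin n), ω.cycleType = lam.parts.filter (· ≠ 1) := by
    rw [Perm.exists_with_cycleType_iff, Fintype.card_fin]
    refine ⟨by have := lam.sum_filter_ne_one_add_count_one; omega, fun a ha => ?_⟩
    rw [Multiset.mem_filter] at ha
    have := lam.parts_pos ha.1
    omega
  exact ⟨ω, by simp [conjClass, hω]⟩

section conjClass

variable {n : ℕ} {lam : n.Partition}

theorem card_filter_apply_eq_self_of_mem_conjClass {ω : Perm (Fin n)}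
    (hω : ω ∈ conjClass n lam) : #{x | ω x = x} = lam.parts.count 1 := by
  simp only [conjClass, mem_filter, mem_univ, true_and] at hω
  rw [ω.card_filter_apply_eq_self, hω, Fintype.card_fin]
  have := lam.sum_filter_ne_one_add_count_one
  omega

theorem card_filter_apply_ne_and_apply_apply_eq_of_mem_conjClass {ω : Perm (Fin n)}
    (hω : ω ∈ conjClass n lam) :
    #{x | ω x ≠ x ∧ ω (ω x) = x} = 2 * lam.parts.count 2 := by
  simp only [conjClass, mem_filter, mem_univ, true_and] at hω
  rw [ω.card_filter_apply_ne_and_apply_apply_eq, hω, Multiset.count_filter_of_pos (by decide)]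

theorem card_mul_card_filter_fix_conjClass (u : Fin n) :
    n * #{ω ∈ conjClass n lam | ω u = u} = #(conjClass n lam) * lam.parts.count 1 := by
  have h := (conjClosed_conjClass n lam).card_mul_card_filter_fix u
  rwa [Fintype.card_fin, sum_const_nat fun ω => card_filter_apply_eq_self_of_mem_conjClass] at h

theorem descFactorial_mul_card_filter_fix_fix_conjClass {u v : Fin n} (huv : u ≠ v) :
    n.descFactorial 2 * #{ω ∈ conjClass n lam | ω u = u ∧ ω v = v}
      = #(conjClass n lam) * (lam.parts.count 1).descFactorial 2 := by
  have h := (conjClosed_conjClass n lam).descFactorial_mul_card_filter_fix_fix huv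
  rwa [Fintype.card_fin, sum_const_nat fun ω hω => by
    rw [card_filter_apply_eq_self_of_mem_conjClass hω]] at h

theorem descFactorial_mul_card_filter_swap_conjClass {u v : Fin n} (huv : u ≠ v) :
    n.descFactorial 2 * #{ω ∈ conjClass n lam | ω u = v ∧ ω v = u}
      = #(conjClass n lam) * (2 * lam.parts.count 2) := by
  have h := (conjClosed_conjClass n lam).descFactorial_mul_card_filter_swap huv
  rwa [Fintype.card_fin,
    sum_const_nat fun ω => card_filter_apply_ne_and_apply_apply_eq_of_mem_conjClass] at h

end conjClass

theorem stmt2 (n : ℕ) (hn : 3 ≤ n) (lam : n.Partition) (a1 a2 : ℕ)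
    (ha1 : a1 = Multiset.count 1 lam.parts) (ha2 : a2 = Multiset.count 2 lam.parts)
    (i j : Fin n) (hij : i < j) :
    (((conjClass n lam).filter fun ω => ω j < ω i).card : ℝ) / ((conjClass n lam).card : ℝ)
      = 1 / 2 + (a2 : ℝ) / ((n : ℝ) * ((n : ℝ) - 1))
        - (a1 : ℝ) * ((a1 : ℝ) - 1) / (2 * (n : ℝ) * ((n : ℝ) - 1))
        + (((j : ℕ) - (i : ℕ) - 1 : ℕ) : ℝ)
          * (((n : ℝ) - (n : ℝ) * (a1 : ℝ) - (a1 : ℝ) + (a1 : ℝ) ^ 2 - 2 * (a2 : ℝ))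
            / ((n : ℝ) * ((n : ℝ) - 1) * ((n : ℝ) - 2))) := by
  subst ha1 ha2
  have hC := conjClosed_conjClass n lam
  have hn3 : (3 : ℝ) ≤ n := by exact_mod_cast hn
  have E1 := congrArg (Nat.cast : ℕ → ℝ) (card_mul_card_filter_fix_conjClass (lam := lam) i)
  have E2 := congrArg (Nat.cast : ℕ → ℝ)
    (descFactorial_mul_card_filter_fix_fix_conjClass (lam := lam) hij.ne)
  have E3 := congrArg (Nat.cast : ℕ → ℝ)
    (descFactorial_mul_card_filter_swap_conjClass (lam := lam) hij.ne)
  have E4 := congrArg (Nat.cast : ℕ → ℝ) (hC.card_eq_card_filter_fix_add hij.ne)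
  have E5 := congrArg (Int.cast : ℤ → ℝ) (hC.two_mul_card_filter_lt_eq hij)
  push_cast [Nat.cast_descFactorial_two, Fintype.card_fin, Nat.cast_sub (by omega : 1 ≤ n)]
    at E1 E2 E3 E4 E5
  have hN : (#(conjClass n lam) : ℝ) ≠ 0 :=
    Nat.cast_ne_zero.2 (conjClass_nonempty n lam).card_ne_zero
  rw [div_eq_iff hN]
  field_simp [show (n : ℝ) - 1 ≠ 0 by linarith, show (n : ℝ) - 2 ≠ 0 by linarith]
  set d : ℝ := (((j : ℕ) - i - 1 : ℕ) : ℝ)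
  linear_combination (n : ℝ) * (n - 1) * E5 + (2 * d - (n - 2)) * E2 + ((n - 2) - 2 * d) * E3
    - 2 * d * n * E1 - 2 * d * n * E4
end

section
/- Let n ≥ 3 and let λ and μ be partitions of n such that λ and μ have the same number of parts equal to 1 and the same number of parts equal to 2. Then for every weighted inversion statistic X on S_n, the average of X over the conjugacy class C_λ equals the average of X over the conjugacy class C_μ. -/
open Finset Equiv Equiv.Perm
open scoped BigOperators

lemma eq_of_sum_eq_of_constant_off {β M : Type*} [Fintype β] [DecidableEq β]
    [AddCancelCommMonoid M] [IsAddTorsionFree M] {f g : β → M} (s : Finset β)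
    (hsum : ∑ x, f x = ∑ x, g x) (hs : ∀ x ∈ s, f x = g x)
    (hf : ∀ x y, x ∉ s → y ∉ s → f x = f y) (hg : ∀ x y, x ∉ s → y ∉ s → g x = g y)
    {b : β} (hb : b ∉ s) : f b = g b := by
  have hoff : ∀ h : β → M, (∀ x y, x ∉ s → y ∉ s → h x = h y) → ∑ x ∈ sᶜ, h x = #sᶜ • h b :=
    fun h hh => by
      rw [← sum_const]
      exact sum_congr rfl fun x hx => hh x b (mem_compl.1 hx) hb
  rw [← sum_add_sum_compl s, ← sum_add_sum_compl s g, sum_congr rfl hs, hoff f hf, hoff g hg]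
    at hsum
  exact IsAddTorsionFree.nsmul_right_injective (card_ne_zero.2 ⟨b, mem_compl.2 hb⟩)
    (add_left_cancel hsum)

lemma eq_of_sum_eq_of_perm_invariant {α M : Type*} [Fintype α] [DecidableEq α]
    [AddCancelCommMonoid M] [IsAddTorsionFree M] {f g : α → M} (s : Finset α)
    (hsum : ∑ x, f x = ∑ x, g x) (hs : ∀ x ∈ s, f x = g x)
    (hf : ∀ σ : Perm α, (∀ x ∈ s, σ x = x) → ∀ x, f (σ x) = f x)
    (hg : ∀ σ : Perm α, (∀ x ∈ s, σ x = x) → ∀ x, g (σ x) = g x) {b : α} (hb : b ∉ s) :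
    f b = g b := by
  have hconst : ∀ h : α → M, (∀ σ : Perm α, (∀ x ∈ s, σ x = x) → ∀ x, h (σ x) = h x) →
      ∀ x y, x ∉ s → y ∉ s → h x = h y := fun h hh x y hx hy => by
    simpa using (hh (swap x y) (fun z hz => swap_apply_of_ne_of_ne (ne_of_mem_of_not_mem hz hx)
      (ne_of_mem_of_not_mem hz hy)) x).symm
  exact eq_of_sum_eq_of_constant_off s hsum hs (hconst f hf) (hconst g hg) hb

lemma exists_perm_apply_eq_and_apply_eq {α : Type*} [DecidableEq α] {i j k l : α} (hij : i ≠ j)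
    (hkl : k ≠ l) :
    ∃ σ : Perm α, σ i = k ∧ σ j = l := by
  refine ⟨swap (swap i k j) l * swap i k, ?_, by simp⟩
  have hne : swap i k j ≠ k := fun h => hij (by simpa using (congrArg (swap i k) h).symm)
  rw [Perm.mul_apply, swap_apply_left, swap_apply_of_ne_of_ne hne.symm hkl]

variable {α : Type*} [DecidableEq α] {S : Finset (Perm α)}

noncomputable def twoPointProb (S : Finset (Perm α)) (i j a b : α) : ℝ :=
  𝔼 ω ∈ S, if ω i = a ∧ ω j = b then 1 else 0

lemma twoPointProb_comm (i j a b : α) : twoPointProb S i j a b = twoPointProb S j i b a := by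
  simp only [twoPointProb, and_comm]

lemma twoPointProb_of_ne {i j : α} (hij : i ≠ j) (a : α) : twoPointProb S i j a a = 0 :=
  expect_eq_zero fun ω _ => if_neg fun h => hij (ω.injective (h.1.trans h.2.symm))

lemma twoPointProb_conj (hS : ∀ σ, ∀ ω ∈ S, σ * ω * σ⁻¹ ∈ S) (σ : Perm α) (i j a b : α) :
    twoPointProb S (σ i) (σ j) (σ a) (σ b) = twoPointProb S i j a b := by
  refine expect_nbij' (fun ω => σ⁻¹ * ω * σ) (fun ω => σ * ω * σ⁻¹)
    (fun ω hω => by simpa using hS σ⁻¹ ω hω) (fun ω hω => hS σ ω hω)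
    (fun ω _ => by group) (fun ω _ => by group) fun ω _ => ?_
  simp [Equiv.symm_apply_eq]

variable [Fintype α]

lemma sum_twoPointProb_right (i j a : α) :
    ∑ b, twoPointProb S i j a b = twoPointProb S i i a a := by
  simp only [twoPointProb, ← expect_sum_comm, and_self]
  refine expect_congr rfl fun ω _ => ?_
  by_cases h : ω i = a <;> simp [h]

lemma sum_twoPointProb_self_self (hS : S.Nonempty) (i : α) :
    ∑ a, twoPointProb S i i a a = 1 := by
  simp [twoPointProb, ← expect_sum_comm, hS]

lemma sum_twoPointProb_fixed {m : ℕ} (hS : S.Nonempty) (hfix : ∀ ω ∈ S, #{x | ω x = x} = m) :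
    ∑ k, twoPointProb S k k k k = m := by
  simp only [twoPointProb, ← expect_sum_comm, and_self, sum_boole]
  rw [expect_congr rfl fun ω hω => by rw [hfix ω hω], expect_const hS]

lemma sum_twoPointProb_fixed_fixed {m : ℕ} (hfix : ∀ ω ∈ S, #{x | ω x = x} = m) (i : α) :
    ∑ k, twoPointProb S i k i k = m * twoPointProb S i i i i := by
  simp only [twoPointProb, ← expect_sum_comm, and_self, mul_expect]
  refine expect_congr rfl fun ω hω => ?_
  by_cases h : ω i = i <;> simp [h, sum_boole, hfix ω hω]

lemma sum_twoPointProb_transposition {m : ℕ} (hS : S.Nonempty)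
    (hsq : ∀ ω ∈ S, #{x | ω (ω x) = x} = m) :
    ∑ k, ∑ l, twoPointProb S k l l k = m := by
  simp only [twoPointProb, ← expect_sum_comm]
  rw [expect_congr rfl fun ω hω => ?_, expect_const hS]
  simp [ite_and, hsq ω hω]

lemma expect_apply_apply_eq_sum_twoPointProb (F : α → α → ℝ) (i j : α) :
    𝔼 ω ∈ S, F (ω i) (ω j) = ∑ a, ∑ b, F a b * twoPointProb S i j a b := by
  simp only [twoPointProb, mul_expect, ← expect_sum_comm]
  refine expect_congr rfl fun ω _ => ?_
  simp [ite_and]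

structure IsConjClosedFixedCount (S : Finset (Perm α)) (m₁ m₂ : ℕ) : Prop where
  nonempty : S.Nonempty
  conj_mem : ∀ σ, ∀ ω ∈ S, σ * ω * σ⁻¹ ∈ S
  card_fixed : ∀ ω ∈ S, #{x | ω x = x} = m₁
  card_fixed_sq : ∀ ω ∈ S, #{x | ω (ω x) = x} = m₂

section Comparison

variable {T : Finset (Perm α)} {m₁ m₂ : ℕ}

lemma twoPointProb_self_eq (hS : IsConjClosedFixedCount S m₁ m₂)
    (hT : IsConjClosedFixedCount T m₁ m₂) (k : α) :
    twoPointProb S k k k k = twoPointProb T k k k k :=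
  eq_of_sum_eq_of_perm_invariant (f := fun k => twoPointProb S k k k k)
    (g := fun k => twoPointProb T k k k k) ∅
    (by rw [sum_twoPointProb_fixed hS.nonempty hS.card_fixed,
      sum_twoPointProb_fixed hT.nonempty hT.card_fixed])
    (by simp) (fun σ _ x => twoPointProb_conj hS.conj_mem σ x x x x)
    (fun σ _ x => twoPointProb_conj hT.conj_mem σ x x x x) (notMem_empty k)

lemma twoPointProb_self_self_eq (hS : IsConjClosedFixedCount S m₁ m₂)
    (hT : IsConjClosedFixedCount T m₁ m₂) (i a : α) :
    twoPointProb S i i a a = twoPointProb T i i a a := by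
  obtain rfl | hai := eq_or_ne a i
  · exact twoPointProb_self_eq hS hT a
  exact eq_of_sum_eq_of_perm_invariant (f := fun a => twoPointProb S i i a a)
    (g := fun a => twoPointProb T i i a a) {i}
    (by rw [sum_twoPointProb_self_self hS.nonempty, sum_twoPointProb_self_self hT.nonempty])
    (by simpa using twoPointProb_self_eq hS hT i)
    (fun σ hσ x => by simpa [hσ i (by simp)] using twoPointProb_conj hS.conj_mem σ i i x x)
    (fun σ hσ x => by simpa [hσ i (by simp)] using twoPointProb_conj hT.conj_mem σ i i x x)
    (by simpa using hai)

lemma twoPointProb_fixed_fixed_eq (hS : IsConjClosedFixedCount S m₁ m₂)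
    (hT : IsConjClosedFixedCount T m₁ m₂) {i j : α} (hij : i ≠ j) :
    twoPointProb S i j i j = twoPointProb T i j i j :=
  eq_of_sum_eq_of_perm_invariant (f := fun k => twoPointProb S i k i k)
    (g := fun k => twoPointProb T i k i k) {i}
    (by rw [sum_twoPointProb_fixed_fixed hS.card_fixed, sum_twoPointProb_fixed_fixed hT.card_fixed,
      twoPointProb_self_eq hS hT])
    (by simpa using twoPointProb_self_eq hS hT i)
    (fun σ hσ x => by simpa [hσ i (by simp)] using twoPointProb_conj hS.conj_mem σ i x i x)
    (fun σ hσ x => by simpa [hσ i (by simp)] using twoPointProb_conj hT.conj_mem σ i x i x)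
    (by simpa using hij.symm)

lemma twoPointProb_transposition_eq (hS : IsConjClosedFixedCount S m₁ m₂)
    (hT : IsConjClosedFixedCount T m₁ m₂) {i j : α} (hij : i ≠ j) :
    twoPointProb S i j j i = twoPointProb T i j j i := by
  have hconst : ∀ U : Finset (Perm α), IsConjClosedFixedCount U m₁ m₂ →
      ∀ p q : α × α, p ∉ (univ : Finset α).diag → q ∉ (univ : Finset α).diag →
        twoPointProb U p.1 p.2 p.2 p.1 = twoPointProb U q.1 q.2 q.2 q.1 := by
    rintro U hU ⟨k, l⟩ ⟨k', l'⟩ hkl hkl'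
    simp only [mem_diag, mem_univ, true_and] at hkl hkl'
    obtain ⟨σ, rfl, rfl⟩ := exists_perm_apply_eq_and_apply_eq hkl hkl'
    exact (twoPointProb_conj hU.conj_mem σ k l l k).symm
  exact eq_of_sum_eq_of_constant_off (f := fun p : α × α => twoPointProb S p.1 p.2 p.2 p.1)
    (g := fun p : α × α => twoPointProb T p.1 p.2 p.2 p.1)
    (univ : Finset α).diag
    (by simp only [Fintype.sum_prod_type]
        rw [sum_twoPointProb_transposition hS.nonempty hS.card_fixed_sq,
          sum_twoPointProb_transposition hT.nonempty hT.card_fixed_sq])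
    (by
      rintro ⟨k, l⟩ h
      obtain rfl : k = l := (mem_diag.1 h).2
      exact twoPointProb_self_eq hS hT k)
    (hconst S hS) (hconst T hT) (b := (i, j)) (by simpa using hij)

lemma twoPointProb_eq_of_mem_of_mem (hS : IsConjClosedFixedCount S m₁ m₂)
    (hT : IsConjClosedFixedCount T m₁ m₂) {i j a b : α} (hij : i ≠ j)
    (ha : a ∈ ({i, j} : Finset α)) (hb : b ∈ ({i, j} : Finset α)) :
    twoPointProb S i j a b = twoPointProb T i j a b := by
  simp only [mem_insert, mem_singleton] at ha hb
  rcases ha with rfl | rfl <;> rcases hb with rfl | rfl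
  · simp [twoPointProb_of_ne hij]
  · exact twoPointProb_fixed_fixed_eq hS hT hij
  · exact twoPointProb_transposition_eq hS hT hij
  · simp [twoPointProb_of_ne hij]

lemma twoPointProb_eq_of_notMem (hS : IsConjClosedFixedCount S m₁ m₂)
    (hT : IsConjClosedFixedCount T m₁ m₂) {i j a b : α} (hb : b ∉ ({i, j, a} : Finset α))
    (heq : ∀ c ∈ ({i, j, a} : Finset α), twoPointProb S i j a c = twoPointProb T i j a c) :
    twoPointProb S i j a b = twoPointProb T i j a b :=
  eq_of_sum_eq_of_perm_invariant (f := fun b => twoPointProb S i j a b)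
    (g := fun b => twoPointProb T i j a b) {i, j, a}
    (by rw [sum_twoPointProb_right, sum_twoPointProb_right, twoPointProb_self_self_eq hS hT]) heq
    (fun σ hσ x => by
      simpa [hσ i (by simp), hσ j (by simp), hσ a (by simp)] using
        twoPointProb_conj hS.conj_mem σ i j a x)
    (fun σ hσ x => by
      simpa [hσ i (by simp), hσ j (by simp), hσ a (by simp)] using
        twoPointProb_conj hT.conj_mem σ i j a x)
    hb

lemma twoPointProb_eq_of_left_mem (hS : IsConjClosedFixedCount S m₁ m₂)
    (hT : IsConjClosedFixedCount T m₁ m₂) {i j a : α} (hij : i ≠ j)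
    (ha : a ∈ ({i, j} : Finset α)) (b : α) :
    twoPointProb S i j a b = twoPointProb T i j a b := by
  have hs : ({i, j, a} : Finset α) = {i, j} := by
    ext x
    simp only [mem_insert, mem_singleton] at ha ⊢
    rcases ha with rfl | rfl <;> tauto
  by_cases hb : b ∈ ({i, j} : Finset α)
  · exact twoPointProb_eq_of_mem_of_mem hS hT hij ha hb
  · refine twoPointProb_eq_of_notMem hS hT (by rwa [hs]) fun c hc => ?_
    exact twoPointProb_eq_of_mem_of_mem hS hT hij ha (by rwa [hs] at hc)

theorem twoPointProb_eq (hS : IsConjClosedFixedCount S m₁ m₂)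
    (hT : IsConjClosedFixedCount T m₁ m₂) {i j : α} (hij : i ≠ j) (a b : α) :
    twoPointProb S i j a b = twoPointProb T i j a b := by
  have hright : ∀ c ∈ ({i, j} : Finset α), twoPointProb S i j a c = twoPointProb T i j a c :=
    fun c hc => by
      rw [twoPointProb_comm, twoPointProb_comm (S := T)]
      exact twoPointProb_eq_of_left_mem hS hT hij.symm (by rwa [pair_comm]) a
  by_cases hb : b ∈ ({i, j} : Finset α)
  · exact hright b hb
  obtain rfl | hab := eq_or_ne a b
  · simp [twoPointProb_of_ne hij]
  refine twoPointProb_eq_of_notMem hS hT ?_ fun c hc => ?_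
  · simp only [mem_insert, mem_singleton, not_or] at hb ⊢
    exact ⟨hb.1, hb.2, hab.symm⟩
  obtain rfl | hc := eq_or_ne c a
  · simp [twoPointProb_of_ne hij]
  · exact hright c (by simp_all)

end Comparison

lemma expect_weightedInversion_eq [LinearOrder α] {T : Finset (Perm α)} {m₁ m₂ : ℕ}
    (hS : IsConjClosedFixedCount S m₁ m₂) (hT : IsConjClosedFixedCount T m₁ m₂) (wt : α → α → ℝ) :
    𝔼 ω ∈ S, ∑ p ∈ univ.filter (fun p : α × α => p.1 < p.2),
        wt p.1 p.2 * (if ω p.2 < ω p.1 then 1 else 0)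
      = 𝔼 ω ∈ T, ∑ p ∈ univ.filter (fun p : α × α => p.1 < p.2),
        wt p.1 p.2 * (if ω p.2 < ω p.1 then 1 else 0) := by
  simp only [expect_sum_comm, ← mul_expect]
  refine sum_congr rfl fun p hp => congrArg _ ?_
  rw [expect_apply_apply_eq_sum_twoPointProb (fun a b => if b < a then 1 else 0),
    expect_apply_apply_eq_sum_twoPointProb (fun a b => if b < a then 1 else 0)]
  simp only [twoPointProb_eq hS hT (mem_filter.1 hp).2.ne]

lemma Equiv.Perm.card_fixed_add_card_support (ω : Perm α) :
    #{x | ω x = x} + #ω.support = Fintype.card α :=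
  card_filter_add_card_filter_not _

lemma Equiv.Perm.card_apply_apply_eq_self (ω : Perm α) :
    #{x | ω (ω x) = x} = #{x | ω x = x} + 2 * ω.cycleType.count 2 := by
  have hsplit : #{x | ω (ω x) = x} = #{x | ω x = x} + #{x | ω x ≠ x ∧ ω (ω x) = x} := by
    rw [← card_union_of_disjoint (disjoint_filter.2 fun x _ h h' => h'.1 h)]
    congr 1
    ext x
    by_cases h : ω x = x <;> simp [h]
  have hunion : ({x | ω x ≠ x ∧ ω (ω x) = x} : Finset α)
      = {c ∈ ω.cycleFactorsFinset | #c.support = 2}.biUnion support := by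
    ext x
    simp only [mem_filter, mem_univ, true_and, mem_biUnion]
    constructor
    · rintro ⟨hx, hxx⟩
      refine ⟨ω.cycleOf x, ⟨cycleOf_mem_cycleFactorsFinset_iff.2 (mem_support.2 hx), ?_⟩,
        mem_support_cycleOf_iff.2 ⟨SameCycle.refl _ _, mem_support.2 hx⟩⟩
      have hcyc := ω.isCycle_cycleOf hx
      have hsq : ω.cycleOf x ^ 2 = 1 := (hcyc.pow_eq_one_iff' (by rwa [cycleOf_apply_self])).2
        (by rw [cycleOf_pow_apply_self, sq, Perm.mul_apply, hxx])
      exact le_antisymm (hcyc.orderOf ▸ orderOf_le_of_pow_eq_one two_pos hsq)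
        hcyc.two_le_card_support
    · rintro ⟨c, ⟨hc, hc2⟩, hx⟩
      obtain ⟨-, hcω⟩ := mem_cycleFactorsFinset_iff.1 hc
      obtain ⟨y, z, -, rfl⟩ := card_support_eq_two.1 hc2
      refine ⟨by rw [← hcω x hx]; exact mem_support.1 hx, ?_⟩
      rw [← hcω x hx, ← hcω _ (apply_mem_support.2 hx), swap_apply_self]
  have hdisj : (↑{c ∈ ω.cycleFactorsFinset | #c.support = 2} : Set (Perm α)).PairwiseDisjoint
      support := fun c hc d hd hcd => (cycleFactorsFinset_pairwise_disjoint ω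
        (mem_filter.1 hc).1 (mem_filter.1 hd).1 hcd).disjoint_support
  rw [hsplit, hunion, card_biUnion hdisj, sum_congr rfl fun c hc => (mem_filter.1 hc).2, sum_const,
    smul_eq_mul, mul_comm, cycleType_def, Multiset.count_map]
  congr 2
  exact congrArg _ (Multiset.filter_congr fun c _ => eq_comm)

lemma Nat.Partition.count_one_add_sum_filter_ne_one {n : ℕ} (lam : n.Partition) :
    lam.parts.count 1 + (lam.parts.filter (· ≠ 1)).sum = n := by
  conv_rhs =>
    rw [← lam.parts_sum, ← Multiset.sum_filter_add_sum_filter_not (· = 1) (s := lam.parts)]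
  rw [Multiset.filter_eq', Multiset.sum_replicate, smul_eq_mul, mul_one]

theorem isConjClosedFixedCount_conjClass {n : ℕ} (lam : n.Partition) :
    IsConjClosedFixedCount (conjClass n lam) (lam.parts.count 1)
      (lam.parts.count 1 + 2 * lam.parts.count 2) := by
  have hcard : ∀ ω ∈ conjClass n lam, #{x | ω x = x} = lam.parts.count 1 := fun ω hω => by
    have := ω.card_fixed_add_card_support
    rw [← sum_cycleType, (mem_filter.1 hω).2, Fintype.card_fin] at this
    have := lam.count_one_add_sum_filter_ne_one
    omega
  refine ⟨?_, fun σ ω hω => by simpa [conjClass] using hω, hcard, fun ω hω => ?_⟩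
  · have hsum := lam.count_one_add_sum_filter_ne_one
    obtain ⟨ω, hω⟩ := (exists_with_cycleType_iff (Fin n) (m := lam.parts.filter (· ≠ 1))).2
      ⟨by rw [Fintype.card_fin]; omega, fun a ha => by
        have := lam.parts_pos (Multiset.mem_of_mem_filter ha)
        have := (Multiset.mem_filter.1 ha).2
        omega⟩
    exact ⟨ω, mem_filter.2 ⟨mem_univ _, hω⟩⟩
  · rw [ω.card_apply_apply_eq_self, hcard ω hω, (mem_filter.1 hω).2,
      Multiset.count_filter_of_pos (by decide)]

theorem stmt4_general (n : ℕ) (lam mu : n.Partition)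
    (h1 : Multiset.count 1 lam.parts = Multiset.count 1 mu.parts)
    (h2 : Multiset.count 2 lam.parts = Multiset.count 2 mu.parts)
    (wt : Fin n → Fin n → ℝ) (X : Equiv.Perm (Fin n) → ℝ)
    (hX : ∀ ω, X ω = ∑ p ∈ Finset.univ.filter (fun p : Fin n × Fin n => p.1 < p.2),
      wt p.1 p.2 * (if ω p.2 < ω p.1 then 1 else 0)) :
    (∑ ω ∈ conjClass n lam, X ω) / ((conjClass n lam).card : ℝ)
      = (∑ ω ∈ conjClass n mu, X ω) / ((conjClass n mu).card : ℝ) := by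
  have hmu := isConjClosedFixedCount_conjClass mu
  rw [← h1, ← h2] at hmu
  simp only [← expect_eq_sum_div_card, hX]
  exact expect_weightedInversion_eq (isConjClosedFixedCount_conjClass lam) hmu wt

theorem stmt4 (n : ℕ) (hn : 3 ≤ n) (lam mu : n.Partition)
    (h1 : Multiset.count 1 lam.parts = Multiset.count 1 mu.parts)
    (h2 : Multiset.count 2 lam.parts = Multiset.count 2 mu.parts)
    (wt : Fin n → Fin n → ℝ) (X : Equiv.Perm (Fin n) → ℝ)
    (hX : ∀ ω, X ω = ∑ p ∈ Finset.univ.filter (fun p : Fin n × Fin n => p.1 < p.2),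
      wt p.1 p.2 * (if ω p.2 < ω p.1 then 1 else 0)) :
    (∑ ω ∈ conjClass n lam, X ω) / ((conjClass n lam).card : ℝ)
      = (∑ ω ∈ conjClass n mu, X ω) / ((conjClass n mu).card : ℝ) :=
  stmt4_general n lam mu h1 h2 wt X hX
end
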